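/- arXiv:math/0404406 — 4 statements merged into one kernel-verified Lean document; each statement's English description precedes it below -/
import Mathlib

section
/- Let q = p^r, G = (ℤ_p)^r acting diagonally on edges of K_{q,q} (shores indexed by G). Suppose H is a G-invariant subgraph that is a union of k edge orbits (1 ≤ k ≤ r) such that every connected component of H has exactly p^{k-1} vertices in each shore and there are exactly p^{r-k+1} components. If a new edge e connects the component of the vertex (O, shore 1) to a different component of H (where O is the identity of G), then the union of H with the G-orbit of e has exactly p^{r-k} connected components, each with exactly p^k vertices in each shore. -/
/-- The bipartite graph on `G ⊕ G` whose edges are the elements of an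
edge set `E ⊆ G × G` (an edge `(a,b)` joins vertex `a` of the first shore to vertex
`b` of the second shore). -/
def bipGraph {G : Type*} (E : Set (G × G)) : SimpleGraph (G ⊕ G) where
  Adj v w := (∃ a b, (a, b) ∈ E ∧ v = Sum.inl a ∧ w = Sum.inr b) ∨
             (∃ a b, (a, b) ∈ E ∧ w = Sum.inl a ∧ v = Sum.inr b)
  symm := ⟨fun v w h => h.elim (fun h => Or.inr h) (fun h => Or.inl h)⟩
  loopless := ⟨by rintro v (⟨a, b, _, rfl, h⟩ | ⟨a, b, _, rfl, h⟩) <;> simp at h⟩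

/-- The `G`-orbit of the edge `e` under the diagonal translation action
`g • (a, b) = (g + a, g + b)`. -/
def edgeOrbit {G : Type*} [Add G] (e : G × G) : Set (G × G) :=
  Set.range fun g : G => (g + e.1, g + e.2)


/-!
For a translation-invariant edge set `E` with difference set `D = {y - x | (x, y) ∈ E}` and
any `d₀ ∈ D`, the walk `x — x + d — x + d - d₀` shows that the components of the bipartite
graph are the cosets of `W = ⟨D - d₀⟩`: a vertex `x` of the first shore and a vertex `y` of the
second lie in the component labelled `x + W`, resp. `y - d₀ + W`. Hence there are `[G : W]`
components, each meeting each shore in `|W|` vertices. Adding the orbit of `(a, b)` adds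
`b - a` to `D`, so `W` grows to `W + ⟨b - a - d₀⟩`; the position of `a` and `b` says exactly
that `b - a - d₀ ∉ W`, and since `G` is an `𝔽_p`-vector space this multiplies `|W| = p^(k-1)`
by `p`.
-/

open SimpleGraph

theorem bipGraph_adj_inl_inr {G : Type*} {E : Set (G × G)} {x y : G} :
    (bipGraph E).Adj (Sum.inl x) (Sum.inr y) ↔ (x, y) ∈ E := by
  constructor
  · rintro (⟨a, c, h, h1, h2⟩ | ⟨a, c, h, h1, h2⟩)
    · rwa [Sum.inl_injective h1, Sum.inr_injective h2]
    · simp at h1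
  · exact fun h => Or.inl ⟨x, y, h, rfl, rfl⟩

theorem QuotientAddGroup.ncard_preimage_mk_singleton {G : Type*} [AddGroup G]
    (W : AddSubgroup G) (q : G ⧸ W) : (QuotientAddGroup.mk ⁻¹' {q} : Set G).ncard = Nat.card W := by
  rw [← Nat.card_coe_set_eq, Nat.card_congr (preimageMkEquivAddSubgroupProdSet W {q})]
  simp

def IsTranslationInvariant {G : Type*} [Add G] (E : Set (G × G)) : Prop :=
  ∀ e ∈ E, ∀ g : G, (g + e.1, g + e.2) ∈ E

section TranslationInvariant

variable {G : Type*} [AddCommGroup G] {E F : Set (G × G)}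

theorem isTranslationInvariant_edgeOrbit (e : G × G) :
    IsTranslationInvariant (edgeOrbit e) := by
  rintro _ ⟨g, rfl⟩ h
  exact ⟨h + g, by simp [add_assoc]⟩

theorem IsTranslationInvariant.union (hE : IsTranslationInvariant E)
    (hF : IsTranslationInvariant F) : IsTranslationInvariant (E ∪ F) := by
  rintro e (he | he) g
  exacts [Or.inl (hE e he g), Or.inr (hF e he g)]

theorem IsTranslationInvariant.mem_iff (hE : IsTranslationInvariant E) {x y : G} :
    (x, y) ∈ E ↔ (0, y - x) ∈ E := by
  constructor
  · intro h
    simpa [neg_add_eq_sub] using hE _ h (-x)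
  · intro h
    simpa using hE _ h x

theorem zero_mem_edgeOrbit_iff {a b d : G} : (0, d) ∈ edgeOrbit (a, b) ↔ d = b - a := by
  constructor
  · rintro ⟨g, hg⟩
    simp only [Prod.mk.injEq] at hg
    rw [← hg.2, eq_neg_of_add_eq_zero_left hg.1]
    abel
  · rintro rfl
    exact ⟨-a, by simp; abel⟩

/-- For translation-invariant `E`, `{d | (0, d) ∈ E}` is the difference set
`D = {y - x | (x, y) ∈ E}`, and this is `⟨D - d₀⟩`. -/
def edgeDiffSubgroup (E : Set (G × G)) (d₀ : G) : AddSubgroup G :=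
  AddSubgroup.closure ((· - d₀) '' {d | (0, d) ∈ E})

theorem edgeDiffSubgroup_union_edgeOrbit (E : Set (G × G)) (d₀ a b : G) :
    edgeDiffSubgroup (E ∪ edgeOrbit (a, b)) d₀
      = edgeDiffSubgroup E d₀ ⊔ AddSubgroup.closure {b - a - d₀} := by
  have : {d | (0, d) ∈ E ∪ edgeOrbit (a, b)} = {d | (0, d) ∈ E} ∪ {b - a} := by
    ext d
    simp [zero_mem_edgeOrbit_iff, or_comm]
  rw [edgeDiffSubgroup, edgeDiffSubgroup, this, Set.image_union, Set.image_singleton,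
    AddSubgroup.closure_union]

def componentLabel (E : Set (G × G)) (d₀ : G) : G ⊕ G → G ⧸ edgeDiffSubgroup E d₀ :=
  Sum.elim (↑) fun y => ↑(y - d₀)

@[simp] theorem componentLabel_inl (d₀ x : G) : componentLabel E d₀ (Sum.inl x) = x := rfl

@[simp] theorem componentLabel_inr (d₀ y : G) : componentLabel E d₀ (Sum.inr y) = ↑(y - d₀) :=
  rfl

variable {d₀ : G}

theorem componentLabel_eq_of_adj (hE : IsTranslationInvariant E) {v w : G ⊕ G}
    (h : (bipGraph E).Adj v w) : componentLabel E d₀ v = componentLabel E d₀ w := by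
  have key : ∀ x y, (x, y) ∈ E →
      ((x : G ⧸ edgeDiffSubgroup E d₀) = ↑(y - d₀)) := by
    intro x y hxy
    rw [QuotientAddGroup.eq, show -x + (y - d₀) = y - x - d₀ by abel]
    exact AddSubgroup.subset_closure ⟨y - x, hE.mem_iff.mp hxy, rfl⟩
  rcases h with ⟨x, y, hxy, rfl, rfl⟩ | ⟨x, y, hxy, rfl, rfl⟩
  exacts [key x y hxy, (key x y hxy).symm]

theorem componentLabel_eq_of_reachable (hE : IsTranslationInvariant E) {v w : G ⊕ G}
    (h : (bipGraph E).Reachable v w) : componentLabel E d₀ v = componentLabel E d₀ w := by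
  obtain ⟨p⟩ := h
  induction p with
  | nil => rfl
  | cons hadj _ ih => exact (componentLabel_eq_of_adj hE hadj).trans ih

theorem reachable_inr_inl_sub (hE : IsTranslationInvariant E) (hd₀ : (0, d₀) ∈ E) (y : G) :
    (bipGraph E).Reachable (Sum.inr y) (Sum.inl (y - d₀)) :=
  (bipGraph_adj_inl_inr.mpr (hE.mem_iff.mpr (by rwa [sub_sub_cancel]))).reachable.symm

theorem reachable_inl_add (hE : IsTranslationInvariant E) (hd₀ : (0, d₀) ∈ E) {w : G}
    (hw : w ∈ edgeDiffSubgroup E d₀) (x : G) :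
    (bipGraph E).Reachable (Sum.inl x) (Sum.inl (x + w)) := by
  induction hw using AddSubgroup.closure_induction generalizing x with
  | mem _ hd =>
    obtain ⟨d, hd, rfl⟩ := hd
    have hx : (bipGraph E).Adj (Sum.inl x) (Sum.inr (x + d)) :=
      bipGraph_adj_inl_inr.mpr (hE.mem_iff.mpr (by rwa [add_sub_cancel_left]))
    rw [← add_sub_assoc]
    exact hx.reachable.trans (reachable_inr_inl_sub hE hd₀ _)
  | zero => rw [add_zero]
  | add w₁ w₂ _ _ ih₁ ih₂ => exact (ih₁ x).trans (by simpa [add_assoc] using ih₂ (x + w₁))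
  | neg w _ ih => simpa using (ih (x + -w)).symm

theorem reachable_of_componentLabel_eq (hE : IsTranslationInvariant E) (hd₀ : (0, d₀) ∈ E)
    {v w : G ⊕ G} (h : componentLabel E d₀ v = componentLabel E d₀ w) :
    (bipGraph E).Reachable v w := by
  have toInl : ∀ v, ∃ x : G,
      componentLabel E d₀ v = x ∧ (bipGraph E).Reachable v (Sum.inl x) := by
    rintro (x | y)
    exacts [⟨x, rfl, .rfl⟩, ⟨y - d₀, rfl, reachable_inr_inl_sub hE hd₀ y⟩]
  obtain ⟨x, hx, hvx⟩ := toInl v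
  obtain ⟨x', hx', hwx'⟩ := toInl w
  have hmem : -x + x' ∈ edgeDiffSubgroup E d₀ :=
    QuotientAddGroup.eq.mp (hx.symm.trans (h.trans hx'))
  have hxx' : (bipGraph E).Reachable (Sum.inl x) (Sum.inl x') := by
    simpa using reachable_inl_add hE hd₀ hmem x
  exact hvx.trans (hxx'.trans hwx'.symm)

noncomputable def componentEquiv (hE : IsTranslationInvariant E) (hd₀ : (0, d₀) ∈ E) :
    (bipGraph E).ConnectedComponent ≃ G ⧸ edgeDiffSubgroup E d₀ :=
  Equiv.ofBijective
    (ConnectedComponent.lift (componentLabel E d₀) fun _ _ p _ =>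
      componentLabel_eq_of_reachable hE p.reachable)
    ⟨ConnectedComponent.ind₂ fun _ _ h =>
      ConnectedComponent.sound (reachable_of_componentLabel_eq hE hd₀ h),
    fun q => q.induction_on fun x => ⟨(bipGraph E).connectedComponentMk (Sum.inl x), rfl⟩⟩

theorem componentEquiv_mk (hE : IsTranslationInvariant E) (hd₀ : (0, d₀) ∈ E) (v : G ⊕ G) :
    componentEquiv hE hd₀ ((bipGraph E).connectedComponentMk v) = componentLabel E d₀ v :=
  rfl

theorem connectedComponentMk_eq_iff (hE : IsTranslationInvariant E) (hd₀ : (0, d₀) ∈ E)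
    {v w : G ⊕ G} :
    (bipGraph E).connectedComponentMk v = (bipGraph E).connectedComponentMk w
      ↔ componentLabel E d₀ v = componentLabel E d₀ w :=
  (componentEquiv hE hd₀).apply_eq_iff_eq.symm

theorem card_connectedComponent_bipGraph (hE : IsTranslationInvariant E) (hd₀ : (0, d₀) ∈ E) :
    Nat.card (bipGraph E).ConnectedComponent = Nat.card (G ⧸ edgeDiffSubgroup E d₀) :=
  Nat.card_congr (componentEquiv hE hd₀)

theorem ncard_inl_mem_component (hE : IsTranslationInvariant E) (hd₀ : (0, d₀) ∈ E)
    (c : (bipGraph E).ConnectedComponent) :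
    {x : G | (bipGraph E).connectedComponentMk (Sum.inl x) = c}.ncard
      = Nat.card (edgeDiffSubgroup E d₀) := by
  have : {x : G | (bipGraph E).connectedComponentMk (Sum.inl x) = c}
      = (↑) ⁻¹' {componentEquiv hE hd₀ c} := by
    ext x
    exact (componentEquiv hE hd₀).apply_eq_iff_eq.symm
  rw [this, QuotientAddGroup.ncard_preimage_mk_singleton]

theorem ncard_inr_mem_component (hE : IsTranslationInvariant E) (hd₀ : (0, d₀) ∈ E)
    (c : (bipGraph E).ConnectedComponent) :
    {y : G | (bipGraph E).connectedComponentMk (Sum.inr y) = c}.ncard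
      = Nat.card (edgeDiffSubgroup E d₀) := by
  have : {y : G | (bipGraph E).connectedComponentMk (Sum.inr y) = c}
      = (↑) ⁻¹' {componentEquiv hE hd₀ c + ↑d₀} := by
    ext y
    show _ = c ↔ _
    rw [← (componentEquiv hE hd₀).apply_eq_iff_eq, componentEquiv_mk]
    simp [componentLabel, sub_eq_iff_eq_add]
  rw [this, QuotientAddGroup.ncard_preimage_mk_singleton]

end TranslationInvariant

theorem Submodule.natCard_sup_span_singleton {K V : Type*} [Field K] [AddCommGroup V]
    [Module K V] [Finite V] {W : Submodule K V} {v : V} (hv : v ∉ W) :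
    Nat.card ↥(W ⊔ span K {v}) = Nat.card K * Nat.card W := by
  rw [Module.natCard_eq_pow_finrank (K := K), Module.natCard_eq_pow_finrank (K := K) (V := W),
    finrank_sup_span_singleton hv, pow_succ']

theorem AddSubgroup.toZModSubmodule_closure (n : ℕ) {M : Type*} [AddCommGroup M]
    [Module (ZMod n) M] (S : Set M) :
    toZModSubmodule n (closure S) = Submodule.span (ZMod n) S :=
  le_antisymm ((closure_le (Submodule.span (ZMod n) S).toAddSubgroup).mpr Submodule.subset_span)
    (Submodule.span_le.mpr subset_closure)

theorem AddSubgroup.natCard_sup_closure_singleton (p : ℕ) [Fact p.Prime] {G : Type*}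
    [AddCommGroup G] [Module (ZMod p) G] [Finite G] {W : AddSubgroup G} {v : G} (hv : v ∉ W) :
    Nat.card ↥(W ⊔ closure {v}) = p * Nat.card W := by
  have := Submodule.natCard_sup_span_singleton (K := ZMod p) (W := toZModSubmodule p W) hv
  rwa [← toZModSubmodule_closure, ← OrderIso.map_sup, Nat.card_zmod] at this

theorem stmt8_general (p r k : ℕ) [Fact p.Prime] (hk1 : 1 ≤ k) (hkr : k ≤ r)
    (E : Set ((Fin r → ZMod p) × (Fin r → ZMod p)))
    (horb : ∃ s : Finset ((Fin r → ZMod p) × (Fin r → ZMod p)),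
      s.card = k ∧ E = ⋃ e ∈ s, edgeOrbit e)
    (hinv : ∀ e ∈ E, ∀ g : Fin r → ZMod p, (g + e.1, g + e.2) ∈ E)
    (hshore : ∀ c : (bipGraph E).ConnectedComponent,
      {x : Fin r → ZMod p | (bipGraph E).connectedComponentMk (Sum.inl x) = c}.ncard
        = p ^ (k - 1) ∧
      {y : Fin r → ZMod p | (bipGraph E).connectedComponentMk (Sum.inr y) = c}.ncard
        = p ^ (k - 1))
    (a b : Fin r → ZMod p)
    (ha : (bipGraph E).connectedComponentMk (Sum.inl a)
        = (bipGraph E).connectedComponentMk (Sum.inl (0 : Fin r → ZMod p)))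
    (hb : (bipGraph E).connectedComponentMk (Sum.inr b)
        ≠ (bipGraph E).connectedComponentMk (Sum.inl (0 : Fin r → ZMod p))) :
    Nat.card (bipGraph (E ∪ edgeOrbit (a, b))).ConnectedComponent = p ^ (r - k) ∧
    ∀ c : (bipGraph (E ∪ edgeOrbit (a, b))).ConnectedComponent,
      {x : Fin r → ZMod p |
        (bipGraph (E ∪ edgeOrbit (a, b))).connectedComponentMk (Sum.inl x) = c}.ncard
        = p ^ k ∧
      {y : Fin r → ZMod p |
        (bipGraph (E ∪ edgeOrbit (a, b))).connectedComponentMk (Sum.inr y) = c}.ncard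
        = p ^ k := by
  obtain ⟨d₀, hd₀⟩ : ∃ d₀, (0, d₀) ∈ E := by
    obtain ⟨s, hs, rfl⟩ := horb
    obtain ⟨⟨x, y⟩, he⟩ := Finset.card_pos.mp (hs ▸ hk1)
    exact ⟨y - x, Set.mem_biUnion he ⟨-x, by simp [neg_add_eq_sub]⟩⟩
  set W := edgeDiffSubgroup E d₀
  have hW : Nat.card W = p ^ (k - 1) := by
    rw [← ncard_inl_mem_component hinv hd₀ ((bipGraph E).connectedComponentMk (.inl 0))]
    exact (hshore _).1
  have haW : a ∈ W := by
    have h := (connectedComponentMk_eq_iff hinv hd₀).mp ha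
    rwa [componentLabel_inl, componentLabel_inl, QuotientAddGroup.mk_zero,
      QuotientAddGroup.eq_zero_iff] at h
  have hbW : b - d₀ ∉ W := by
    rwa [ne_eq, connectedComponentMk_eq_iff hinv hd₀, componentLabel_inr, componentLabel_inl,
      QuotientAddGroup.mk_zero, QuotientAddGroup.eq_zero_iff] at hb
  have hv : b - a - d₀ ∉ W := fun h => hbW (by convert add_mem h haW using 1; abel)
  have hW' : Nat.card (edgeDiffSubgroup (E ∪ edgeOrbit (a, b)) d₀) = p ^ k := by
    rw [edgeDiffSubgroup_union_edgeOrbit, AddSubgroup.natCard_sup_closure_singleton p hv, hW,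
      ← pow_succ', Nat.sub_add_cancel hk1]
  have hE' := IsTranslationInvariant.union hinv (isTranslationInvariant_edgeOrbit (a, b))
  have hd₀' : (0, d₀) ∈ E ∪ edgeOrbit (a, b) := Or.inl hd₀
  refine ⟨?_, fun c => ⟨?_, ?_⟩⟩
  · have hcard := AddSubgroup.card_eq_card_quotient_mul_card_addSubgroup
      (edgeDiffSubgroup (E ∪ edgeOrbit (a, b)) d₀)
    rw [← card_connectedComponent_bipGraph hE' hd₀', hW', Nat.card_fun, Nat.card_zmod,
      Nat.card_fin, ← pow_sub_mul_pow p hkr] at hcard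
    exact (Nat.eq_of_mul_eq_mul_right (pow_pos (Fact.out : p.Prime).pos k) hcard).symm
  · rw [ncard_inl_mem_component hE' hd₀', hW']
  · rw [ncard_inr_mem_component hE' hd₀', hW']

/-- Let `q = p^r` and `G = (ℤ_p)^r` act diagonally on the edges of
`K_{q,q}`.  Suppose `H = bipGraph E` is a `G`-invariant subgraph which is a union of
`k` edge orbits (`1 ≤ k ≤ r`), every connected component of `H` has exactly `p^(k-1)`
vertices in each shore, and `H` has exactly `p^(r-k+1)` components.  If a new edge
`(a, b)` connects the component of the vertex `(O, shore 1)` (where `O = 0` is the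
identity of `G`) to a different component, then the union of `E` with the orbit of
`(a, b)` yields a graph with exactly `p^(r-k)` components, each having exactly `p^k`
vertices in each shore. -/
theorem stmt8 (p r k : ℕ) [Fact p.Prime] (hk1 : 1 ≤ k) (hkr : k ≤ r)
    (E : Set ((Fin r → ZMod p) × (Fin r → ZMod p)))
    (horb : ∃ s : Finset ((Fin r → ZMod p) × (Fin r → ZMod p)),
      s.card = k ∧ E = ⋃ e ∈ s, edgeOrbit e)
    (hinv : ∀ e ∈ E, ∀ g : Fin r → ZMod p, (g + e.1, g + e.2) ∈ E)
    (hshore : ∀ c : (bipGraph E).ConnectedComponent,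
      {x : Fin r → ZMod p | (bipGraph E).connectedComponentMk (Sum.inl x) = c}.ncard
        = p ^ (k - 1) ∧
      {y : Fin r → ZMod p | (bipGraph E).connectedComponentMk (Sum.inr y) = c}.ncard
        = p ^ (k - 1))
    (hcomp : Nat.card (bipGraph E).ConnectedComponent = p ^ (r - k + 1))
    (a b : Fin r → ZMod p)
    (ha : (bipGraph E).connectedComponentMk (Sum.inl a)
        = (bipGraph E).connectedComponentMk (Sum.inl (0 : Fin r → ZMod p)))
    (hb : (bipGraph E).connectedComponentMk (Sum.inr b)
        ≠ (bipGraph E).connectedComponentMk (Sum.inl (0 : Fin r → ZMod p))) :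
    Nat.card (bipGraph (E ∪ edgeOrbit (a, b))).ConnectedComponent = p ^ (r - k) ∧
    ∀ c : (bipGraph (E ∪ edgeOrbit (a, b))).ConnectedComponent,
      {x : Fin r → ZMod p |
        (bipGraph (E ∪ edgeOrbit (a, b))).connectedComponentMk (Sum.inl x) = c}.ncard
        = p ^ k ∧
      {y : Fin r → ZMod p |
        (bipGraph (E ∪ edgeOrbit (a, b))).connectedComponentMk (Sum.inr y) = c}.ncard
        = p ^ k :=
  stmt8_general p r k hk1 hkr E horb hinv hshore a b ha hb
end

section
/- Let q = p^r, G = (ℤ_p)^r acting diagonally on edges of K_{q,q} (shores indexed by G). For any fixed edge e of K_{q,q}, the number of connected G-invariant subgraphs formed as unions of r+1 edge orbits that contain e is (q - p⁰)(q - p¹)⋯(q - p^{r-1}) / r!. -/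
open Function Set Submodule Nat

section Counting

variable {α : Type*}

def subtypeMemEquivSubtypeNotMem (a : α) (P : Set α → Prop) :
    {s : Set α // a ∈ s ∧ P s} ≃ {t : Set α // a ∉ t ∧ P (insert a t)} where
  toFun s := ⟨s.1 \ {a}, fun h => h.2 rfl, by
    rw [insert_sdiff_singleton, insert_eq_of_mem s.2.1]; exact s.2.2⟩
  invFun t := ⟨insert a t.1, mem_insert a t.1, t.2.2⟩
  left_inv s := Subtype.ext <| by simp only [insert_sdiff_singleton, insert_eq_of_mem s.2.1]
  right_inv t := Subtype.ext <| insert_sdiff_self_of_notMem t.2.1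

theorem card_injective_tuples_eq_mul_factorial [Finite α] {n : ℕ} (P : Set α → Prop)
    (hP : ∀ s, P s → Nat.card s = n) :
    Nat.card {v : Fin n → α // Injective v ∧ P (range v)} = Nat.card {s : Set α // P s} * n ! := by
  let f : {v : Fin n → α // Injective v ∧ P (range v)} → {s : Set α // P s} :=
    fun v => ⟨range v.1, v.2.2⟩
  have fiber (s : {s : Set α // P s}) : {v // f v = s} ≃ (Fin n ≃ s.1) :=
    { toFun v :=
        (Equiv.ofInjective v.1.1 v.1.2.1).trans (Equiv.setCongr (congrArg Subtype.val v.2))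
      invFun σ := by
        have hσ : range (Subtype.val ∘ σ) = s.1 := by
          rw [range_comp, σ.range_eq_univ, image_univ, Subtype.range_coe]
        exact ⟨⟨_, Subtype.val_injective.comp σ.injective, by rw [hσ]; exact s.2⟩,
          Subtype.ext hσ⟩
      left_inv v := rfl
      right_inv σ := Equiv.ext fun i => rfl }
  calc Nat.card {v : Fin n → α // Injective v ∧ P (range v)}
      = Nat.card (Σ s : {s : Set α // P s}, Fin n ≃ s.1) :=
        Nat.card_congr ((Equiv.sigmaFiberEquiv f).symm.trans (Equiv.sigmaCongrRight fiber))
    _ = Nat.card ({s : Set α // P s} × Equiv.Perm (Fin n)) := Nat.card_congr <|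
        (Equiv.sigmaCongrRight fun s : {s : Set α // P s} =>
          (Equiv.refl (Fin n)).equivCongr (Finite.equivFinOfCardEq (hP s.1 s.2))).trans
          (Equiv.sigmaEquivProd _ _)
    _ = Nat.card {s : Set α // P s} * n ! := by rw [Nat.card_prod, Nat.card_perm, Nat.card_fin]

end Counting

theorem linearIndependent_iff_injective_and_basis_range {K V : Type*} [DivisionRing K]
    [AddCommGroup V] [Module K V] [FiniteDimensional K V] {n : ℕ} (hn : Module.finrank K V = n)
    {v : Fin n → V} :
    LinearIndependent K v ↔
      Injective v ∧ 0 ∉ range v ∧ Nat.card (range v) = n ∧ span K (range v) = ⊤ := by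
  refine ⟨fun hv => ⟨hv.injective, fun ⟨i, hi⟩ => hv.ne_zero i hi, ?_, ?_⟩,
    fun ⟨_, _, _, hspan⟩ => linearIndependent_of_top_le_span_of_card_eq_finrank hspan.ge ?_⟩
  · rw [Nat.card_range_of_injective hv.injective, Nat.card_fin]
  · exact hv.span_eq_top_of_card_eq_finrank' (by rw [Fintype.card_fin, hn])
  · rw [Fintype.card_fin, hn]

theorem AddSubgroup.closure_eq_top_iff_span_zmod {n : ℕ} {M : Type*} [AddCommGroup M]
    [Module (ZMod n) M] (s : Set M) :
    AddSubgroup.closure s = ⊤ ↔ span (ZMod n) s = ⊤ := by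
  have : toZModSubmodule n (AddSubgroup.closure s) = span (ZMod n) s :=
    le_antisymm
      (fun x hx => (AddSubgroup.closure_le (span (ZMod n) s).toAddSubgroup).2 subset_span hx)
      (span_le.2 AddSubgroup.subset_closure)
  rw [← this, map_eq_top_iff]

theorem SimpleGraph.Reachable.eq_of_forall_adj {V β : Type*} {Γ : SimpleGraph V} {f : V → β}
    (hf : ∀ u v, Γ.Adj u v → f u = f v) {u v : V} (h : Γ.Reachable u v) : f u = f v := by
  simpa [Relation.reflTransGen_eq_self] using ((reachable_iff_reflTransGen u v).1 h).lift f hf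

section BipGraph

variable {G : Type*}

@[simp] theorem bipGraph_adj_inl_inr_s10 (E : Set (G × G)) (a b : G) :
    (bipGraph E).Adj (.inl a) (.inr b) ↔ (a, b) ∈ E := by simp [bipGraph]

@[simp] theorem bipGraph_adj_inr_inl (E : Set (G × G)) (a b : G) :
    (bipGraph E).Adj (.inr b) (.inl a) ↔ (a, b) ∈ E := by simp [bipGraph]

@[simp] theorem bipGraph_not_adj_inl_inl (E : Set (G × G)) (a b : G) :
    ¬(bipGraph E).Adj (.inl a) (.inl b) := by simp [bipGraph]

@[simp] theorem bipGraph_not_adj_inr_inr (E : Set (G × G)) (a b : G) :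
    ¬(bipGraph E).Adj (.inr a) (.inr b) := by simp [bipGraph]

end BipGraph

section DiffEdges

variable {G : Type*} [AddCommGroup G]

def diffEdges (D : Set G) : Set (G × G) := {x | x.2 - x.1 ∈ D}

@[simp] theorem mem_diffEdges {D : Set G} {x : G × G} : x ∈ diffEdges D ↔ x.2 - x.1 ∈ D := .rfl

theorem diffEdges_injective : Injective (diffEdges : Set G → Set (G × G)) := fun D D' h =>
  Set.ext fun d => by simpa using congrArg ((0, d) ∈ ·) h

theorem mem_edgeOrbit_iff {e x : G × G} : x ∈ edgeOrbit e ↔ x.2 - x.1 = e.2 - e.1 := by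
  refine ⟨?_, fun h => ⟨x.1 - e.1, Prod.ext (sub_add_cancel _ _) ?_⟩⟩
  · rintro ⟨g, rfl⟩
    exact add_sub_add_left_eq_sub _ _ _
  · rw [sub_eq_sub_iff_sub_eq_sub] at h
    show x.1 - e.1 + e.2 = x.2
    rw [← h, sub_add_cancel]

theorem edgeOrbit_eq_edgeOrbit_iff {e e' : G × G} :
    edgeOrbit e = edgeOrbit e' ↔ e.2 - e.1 = e'.2 - e'.1 := by
  refine ⟨fun h => mem_edgeOrbit_iff.1 (h ▸ ⟨0, by simp⟩), fun h => Set.ext fun x => ?_⟩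
  rw [mem_edgeOrbit_iff, mem_edgeOrbit_iff, h]

theorem invariant_iff_mem_range_diffEdges {E : Set (G × G)} :
    (∀ e ∈ E, ∀ g : G, (g + e.1, g + e.2) ∈ E) ↔ E ∈ range diffEdges := by
  refine ⟨fun hE => ⟨(fun x => x.2 - x.1) '' E,
    Set.ext fun x => ⟨?_, fun hx => ⟨x, hx, rfl⟩⟩⟩, ?_⟩
  · rintro ⟨y, hy, hxy⟩
    obtain ⟨g, rfl⟩ := mem_edgeOrbit_iff.2 hxy.symm
    exact hE y hy g
  · rintro ⟨D, rfl⟩ e he g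
    simpa using he

theorem card_edgeOrbits_diffEdges (D : Set G) :
    Nat.card {O : Set (G × G) // ∃ e ∈ diffEdges D, O = edgeOrbit e} = Nat.card D := by
  refine Nat.card_congr (.symm (.ofBijective
    (fun d => ⟨edgeOrbit (0, d), (0, d), by simp [d.2], rfl⟩) ⟨fun d d' h => ?_, ?_⟩))
  · exact Subtype.ext (by simpa [edgeOrbit_eq_edgeOrbit_iff] using congrArg Subtype.val h)
  · rintro ⟨O, e, he, rfl⟩
    exact ⟨⟨e.2 - e.1, he⟩, Subtype.ext (edgeOrbit_eq_edgeOrbit_iff.2 (by simp))⟩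

theorem SimpleGraph.Reachable.bipGraph_diffEdges_translate {D : Set G} (g : G) {u v : G ⊕ G}
    (h : (bipGraph (diffEdges D)).Reachable u v) :
    (bipGraph (diffEdges D)).Reachable (Sum.map (· + g) (· + g) u) (Sum.map (· + g) (· + g) v) :=
  h.map ⟨Sum.map (· + g) (· + g), by rintro (a | b) (a' | b') h <;> simp_all⟩

theorem closure_sub_eq_top_of_connected {D : Set G} (d₀ : G)
    (hconn : (bipGraph (diffEdges D)).Connected) :
    AddSubgroup.closure ((· - d₀) '' D) = ⊤ := by
  set H := AddSubgroup.closure ((· - d₀) '' D)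
  have hedge : ∀ a b : G, b - a ∈ D → (a : G ⧸ H) = ↑(b - d₀) := fun a b h => by
    rw [QuotientAddGroup.eq, show -a + (b - d₀) = b - a - d₀ by abel]
    exact AddSubgroup.subset_closure ⟨b - a, h, rfl⟩
  -- `inl a ↦ a`, `inr b ↦ b - d₀` is constant modulo `H` along edges
  let c : G ⊕ G → G ⧸ H := Sum.elim (↑) fun b => ↑(b - d₀)
  have hc : ∀ u v, (bipGraph (diffEdges D)).Adj u v → c u = c v := by
    rintro (a | b) (a' | b') h <;> simp only [bipGraph_not_adj_inl_inl, bipGraph_not_adj_inr_inr,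
      bipGraph_adj_inl_inr_s10, bipGraph_adj_inr_inl, mem_diffEdges] at h
    exacts [hedge a b' h, (hedge a' b h).symm]
  refine eq_top_iff.2 fun x _ => ?_
  exact (QuotientAddGroup.eq_zero_iff x).1
    ((hconn.preconnected (.inl x) (.inl 0)).eq_of_forall_adj hc)

theorem connected_of_closure_sub_eq_top {D : Set G} {d₀ : G} (hd₀ : d₀ ∈ D)
    (htop : AddSubgroup.closure ((· - d₀) '' D) = ⊤) : (bipGraph (diffEdges D)).Connected := by
  set Γ := bipGraph (diffEdges D)
  have hstep : ∀ a, Γ.Adj (.inl (a - d₀)) (.inr a) := fun a => by simpa [Γ] using hd₀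
  -- translations are automorphisms, so the `a` with `inl a` reachable from `inl 0` form a subgroup
  let R : AddSubgroup G :=
    { carrier := {a | Γ.Reachable (.inl 0) (.inl a)}
      zero_mem' := .rfl
      add_mem' := fun {a b} ha hb => ha.trans <| by
        simpa [add_comm] using hb.bipGraph_diffEdges_translate a
      neg_mem' := fun {a} ha => by simpa using (ha.bipGraph_diffEdges_translate (-a)).symm }
  have hR : ∀ a, Γ.Reachable (.inl 0) (.inl a) := by
    refine fun a => (AddSubgroup.closure_le R).2 ?_ (htop ▸ AddSubgroup.mem_top a)
    rintro _ ⟨d, hd, rfl⟩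
    exact (SimpleGraph.Adj.reachable (by simpa [Γ] using hd)).trans (hstep d).reachable.symm
  refine (SimpleGraph.connected_iff_exists_forall_reachable _).2 ⟨.inl 0, ?_⟩
  rintro (a | b)
  exacts [hR a, (hR (b - d₀)).trans (hstep b).reachable]

theorem connected_bipGraph_diffEdges_iff {D : Set G} {d₀ : G} (hd₀ : d₀ ∈ D) :
    (bipGraph (diffEdges D)).Connected ↔ AddSubgroup.closure ((· - d₀) '' D) = ⊤ :=
  ⟨closure_sub_eq_top_of_connected d₀, connected_of_closure_sub_eq_top hd₀⟩

theorem card_connected_invariant_edgeSets (e : G × G) (n : ℕ) :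
    Nat.card {E : Set (G × G) // e ∈ E ∧ (∀ e' ∈ E, ∀ g : G, (g + e'.1, g + e'.2) ∈ E) ∧
        Nat.card {O : Set (G × G) // ∃ e' ∈ E, O = edgeOrbit e'} = n ∧
        (bipGraph E).Connected} =
      Nat.card {D : Set G // e.2 - e.1 ∈ D ∧ Nat.card D = n ∧
        AddSubgroup.closure ((· - (e.2 - e.1)) '' D) = ⊤} := by
  refine Nat.card_congr (.symm (.ofBijective (fun D => ⟨diffEdges D.1, ?_⟩) ⟨?_, ?_⟩))
  · obtain ⟨D, hd, hcard, htop⟩ := D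
    exact ⟨hd, invariant_iff_mem_range_diffEdges.2 ⟨D, rfl⟩,
      by rw [card_edgeOrbits_diffEdges, hcard], (connected_bipGraph_diffEdges_iff hd).2 htop⟩
  · exact fun D D' h => Subtype.ext (diffEdges_injective (congrArg Subtype.val h))
  · rintro ⟨E, he, hinv, hcard, hconn⟩
    obtain ⟨D, rfl⟩ := invariant_iff_mem_range_diffEdges.1 hinv
    rw [mem_diffEdges] at he
    exact ⟨⟨D, he, by rwa [card_edgeOrbits_diffEdges] at hcard,
      (connected_bipGraph_diffEdges_iff he).1 hconn⟩, rfl⟩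

end DiffEdges

section GeneratingSets

variable {G : Type*} [AddGroup G]

theorem card_sets_mem_eq_card_sets_zero_mem (d₀ : G) (n : ℕ) (P : Set G → Prop) :
    Nat.card {D : Set G // d₀ ∈ D ∧ Nat.card D = n ∧ P ((· - d₀) '' D)} =
      Nat.card {D : Set G // 0 ∈ D ∧ Nat.card D = n ∧ P D} :=
  Nat.card_congr <| (Equiv.Set.congr (Equiv.subRight d₀)).subtypeEquiv fun D => by
    have hD : Equiv.Set.congr (Equiv.subRight d₀) D = (· - d₀) '' D := rfl
    simp [hD, Nat.card_image_of_injective sub_left_injective, sub_eq_zero]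

theorem card_generating_sets_zero_mem_eq_zero_notMem [Finite G] (n : ℕ) :
    Nat.card {D : Set G // 0 ∈ D ∧ Nat.card D = n + 1 ∧ AddSubgroup.closure D = ⊤} =
      Nat.card {W : Set G // 0 ∉ W ∧ Nat.card W = n ∧ AddSubgroup.closure W = ⊤} := by
  refine Nat.card_congr <| (subtypeMemEquivSubtypeNotMem 0 _).trans
    (Equiv.subtypeEquivRight fun W => and_congr_right fun h0 => ?_)
  rw [AddSubgroup.closure_insert_zero, Nat.card_coe_set_eq, Nat.card_coe_set_eq,
    ncard_insert_of_notMem h0, Nat.add_right_cancel_iff]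

end GeneratingSets

theorem card_basis_sets_mul_factorial {K V : Type*} [Field K] [Fintype K] [AddCommGroup V]
    [Module K V] [Finite V] {n : ℕ} (hn : Module.finrank K V = n) :
    Nat.card {W : Set V // 0 ∉ W ∧ Nat.card W = n ∧ span K W = ⊤} * n ! =
      ∏ i ∈ Finset.range n, (Fintype.card K ^ n - Fintype.card K ^ i) := by
  rw [← card_injective_tuples_eq_mul_factorial _ fun _ h => h.2.1, ← Nat.card_congr
    (Equiv.subtypeEquivRight fun v => linearIndependent_iff_injective_and_basis_range hn),
    card_linearIndependent hn.ge, hn, ← Fin.prod_univ_eq_prod_range]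

theorem stmt10_general (p r : ℕ) [Fact p.Prime]
    (e : (Fin r → ZMod p) × (Fin r → ZMod p)) :
    (Nat.card {E : Set ((Fin r → ZMod p) × (Fin r → ZMod p)) //
        e ∈ E ∧
        (∀ e' ∈ E, ∀ g : Fin r → ZMod p, (g + e'.1, g + e'.2) ∈ E) ∧
        Nat.card {O : Set ((Fin r → ZMod p) × (Fin r → ZMod p)) //
          ∃ e' ∈ E, O = edgeOrbit e'} = r + 1 ∧
        (bipGraph E).Connected}) * r.factorial =
      ∏ i ∈ Finset.range r, (p ^ r - p ^ i) := by
  rw [card_connected_invariant_edgeSets,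
    card_sets_mem_eq_card_sets_zero_mem _ _ fun D => AddSubgroup.closure D = ⊤,
    card_generating_sets_zero_mem_eq_zero_notMem]
  simp only [AddSubgroup.closure_eq_top_iff_span_zmod (n := p)]
  rw [card_basis_sets_mul_factorial (Module.finrank_fin_fun (ZMod p)), ZMod.card]

/-- For `q = p^r` and `G = (ℤ_p)^r` acting diagonally on the edges of
`K_{q,q}`, the number of connected `G`-invariant subgraphs formed as unions of `r+1`
edge orbits that contain a fixed edge `e` equals `(q-p⁰)(q-p¹)⋯(q-p^(r-1)) / r!`
(stated multiplied through by `r!`). -/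
theorem stmt10 (p r : ℕ) [Fact p.Prime] (hr : 1 ≤ r)
    (e : (Fin r → ZMod p) × (Fin r → ZMod p)) :
    (Nat.card {E : Set ((Fin r → ZMod p) × (Fin r → ZMod p)) //
        e ∈ E ∧
        (∀ e' ∈ E, ∀ g : Fin r → ZMod p, (g + e'.1, g + e'.2) ∈ E) ∧
        Nat.card {O : Set ((Fin r → ZMod p) × (Fin r → ZMod p)) //
          ∃ e' ∈ E, O = edgeOrbit e'} = r + 1 ∧
        (bipGraph E).Connected}) * r.factorial =
      ∏ i ∈ Finset.range r, (p ^ r - p ^ i) :=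
  stmt10_general p r e
end

section
/- Let q = p^r be a prime power and r ≥ 1. Then the integer q·(q-1)(q-p)(q-p²)⋯(q-p^{r-1}) is divisible by (r+1)!, i.e., q·∏_{i=0}^{r-1}(q - p^i)/(r+1)! is a positive integer. -/
set_option synthInstance.maxHeartbeats 1000000
open Matrix Finset MulAction


lemma exists_linearEquiv_apply_eq {K V : Type*} [DivisionRing K] [AddCommGroup V] [Module K V]
    [Finite V] {x y : V} (hx : x ≠ 0) (hy : y ≠ 0) : ∃ g : V ≃ₗ[K] V, g x = y := by
  classical
  cases nonempty_fintype V
  have hlx : LinearIndepOn K id ({x} : Set V) := LinearIndepOn.singleton hx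
  have hly : LinearIndepOn K id ({y} : Set V) := LinearIndepOn.singleton hy
  let bx := Module.Basis.extend hlx
  let bY := Module.Basis.extend hly
  have hxm : x ∈ hlx.extend (Set.subset_univ _) := hlx.subset_extend _ rfl
  have hym : y ∈ hly.extend (Set.subset_univ _) := hly.subset_extend _ rfl
  have e : (hlx.extend (Set.subset_univ _)) ≃ (hly.extend (Set.subset_univ _)) :=
    Fintype.equivOfCardEq (by
      rw [← Module.finrank_eq_card_basis bx, ← Module.finrank_eq_card_basis bY])
  let e' := (Equiv.swap (⟨x, hxm⟩ : hlx.extend (Set.subset_univ _)) (e.symm ⟨y, hym⟩)).trans e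
  refine ⟨bx.equiv bY e', ?_⟩
  have h1 : bx ⟨x, hxm⟩ = x := Module.Basis.extend_apply_self hlx ⟨x, hxm⟩
  have h2 : e' ⟨x, hxm⟩ = ⟨y, hym⟩ := by
    simp [e', Equiv.swap_apply_left]
  have h3 : (bx.equiv bY e') (bx ⟨x, hxm⟩) = bY (e' ⟨x, hxm⟩) := Module.Basis.equiv_apply _ _ _ _
  rw [h1, h2, Module.Basis.extend_apply_self hly ⟨y, hym⟩] at h3
  exact h3

section Action

variable {m : Type*} [Fintype m] [DecidableEq m] {K : Type*} [Field K]

instance glVecAction : MulAction (GL m K) (m → K) where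
  smul A v := (A : Matrix m m K) *ᵥ v
  one_smul v := by show ((1 : GL m K) : Matrix m m K) *ᵥ v = v; simp
  mul_smul A B v := by
    show ((A * B : GL m K) : Matrix m m K) *ᵥ v
      = (A : Matrix m m K) *ᵥ ((B : Matrix m m K) *ᵥ v)
    rw [Units.val_mul, Matrix.mulVec_mulVec]

lemma glVec_smul_def (A : GL m K) (v : m → K) : A • v = (A : Matrix m m K) *ᵥ v := rfl

/-- A linear automorphism of `m → K` as an element of `GL m K`. -/
noncomputable def linEquivGL (g : (m → K) ≃ₗ[K] (m → K)) : GL m K :=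
  ⟨LinearMap.toMatrix' (g : (m → K) →ₗ[K] (m → K)),
   LinearMap.toMatrix' (g.symm : (m → K) →ₗ[K] (m → K)),
   by rw [← LinearMap.toMatrix'_comp, LinearEquiv.comp_coe, LinearEquiv.symm_trans_self,
       LinearEquiv.refl_toLinearMap, LinearMap.toMatrix'_id],
   by rw [← LinearMap.toMatrix'_comp, LinearEquiv.comp_coe, LinearEquiv.self_trans_symm,
       LinearEquiv.refl_toLinearMap, LinearMap.toMatrix'_id]⟩

lemma linEquivGL_smul (g : (m → K) ≃ₗ[K] (m → K)) (v : m → K) :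
    (linEquivGL g) • v = g v := by
  show LinearMap.toMatrix' (g : (m → K) →ₗ[K] (m → K)) *ᵥ v = g v
  rw [← Matrix.toLin'_apply, Matrix.toLin'_toMatrix']
  rfl

lemma orbit_eq_ne_zero [Finite K] {u : m → K} (hu : u ≠ 0) :
    orbit (GL m K) u = {v | v ≠ 0} := by
  ext v
  constructor
  · rintro ⟨A, rfl⟩
    intro h0
    apply hu
    replace h0 : A • u = 0 := h0
    have : A⁻¹ • (A • u) = A⁻¹ • (0 : m → K) := by rw [h0]
    rw [inv_smul_smul, glVec_smul_def, Matrix.mulVec_zero] at this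
    exact this
  · intro hv
    obtain ⟨g, hg⟩ := exists_linearEquiv_apply_eq (K := K) hu hv
    exact ⟨linEquivGL g, show linEquivGL g • u = v by rw [linEquivGL_smul, hg]⟩

end Action

section Perm

variable {m : Type*} [Fintype m] [DecidableEq m] {R : Type*} [CommRing R]

lemma permMatrix_mul (σ τ : Equiv.Perm m) :
    (σ.permMatrix R) * (τ.permMatrix R) = ((τ * σ).permMatrix R) := by
  show σ.toPEquiv.toMatrix * τ.toPEquiv.toMatrix = _
  rw [← PEquiv.toMatrix_trans, ← Equiv.toPEquiv_trans]
  rfl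

lemma permMatrix_one : ((1 : Equiv.Perm m).permMatrix R) = 1 := by
  show (1 : Equiv.Perm m).toPEquiv.toMatrix = 1
  rw [show (1 : Equiv.Perm m).toPEquiv = PEquiv.refl m from rfl, PEquiv.toMatrix_refl]

/-- Permutation matrices as a monoid hom into `GL`. -/
def permGL : Equiv.Perm m →* GL m R where
  toFun σ := ⟨(σ⁻¹).permMatrix R, σ.permMatrix R,
    by rw [_root_.permMatrix_mul, mul_inv_cancel, _root_.permMatrix_one],
    by rw [_root_.permMatrix_mul, inv_mul_cancel, _root_.permMatrix_one]⟩
  map_one' := by ext : 1; simp [_root_.permMatrix_one]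
  map_mul' σ τ := by ext : 1; show ((σ * τ)⁻¹).permMatrix R = (σ⁻¹).permMatrix R * (τ⁻¹).permMatrix R; rw [_root_.permMatrix_mul]; simp [_root_.mul_inv_rev]

lemma toPEquiv_injective' : Function.Injective (Equiv.toPEquiv : Equiv.Perm m → (m ≃. m)) := by
  intro σ τ h
  ext i
  have : σ.toPEquiv i = τ.toPEquiv i := by rw [h]
  simpa [Equiv.toPEquiv] using this

lemma permGL_injective [Nontrivial R] : Function.Injective (permGL (m := m) (R := R)) := by
  intro σ τ h
  have h2 : (σ⁻¹).permMatrix R = (τ⁻¹).permMatrix R := congrArg Units.val h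
  exact inv_injective (toPEquiv_injective' (PEquiv.toMatrix_injective h2))

lemma permGL_mulVec_one (σ : Equiv.Perm m) :
    ((permGL σ : GL m R) : Matrix m m R) *ᵥ (fun _ => (1 : R)) = fun _ => 1 := by
  funext i
  show (((σ⁻¹).permMatrix R) *ᵥ _) i = 1
  simp [Matrix.mulVec, dotProduct, PEquiv.toMatrix, Equiv.toPEquiv, Option.mem_def]

end Perm

/-- For a prime power `q = p^r` with `r ≥ 1`, the integer
`q·(q-1)(q-p)(q-p²)⋯(q-p^(r-1))` is divisible by `(r+1)!`, i.e.
`q·∏_{i=0}^{r-1}(q - p^i)/(r+1)!` is a positive integer. -/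
theorem stmt11 (p r : ℕ) (hp : p.Prime) (hr : 1 ≤ r) :
    (r + 1).factorial ∣ p ^ r * ∏ i ∈ Finset.range r, (p ^ r - p ^ i) ∧
    0 < (p ^ r * ∏ i ∈ Finset.range r, (p ^ r - p ^ i)) / (r + 1).factorial := by
  classical
  haveI : Fact p.Prime := ⟨hp⟩
  haveI : NeZero p := ⟨hp.ne_zero⟩
  set N := p ^ r * ∏ i ∈ Finset.range r, (p ^ r - p ^ i) with hN
  set n := r + 1 with hn
  let u : Fin n → ZMod p := fun _ => 1
  have hu : u ≠ 0 := by
    intro h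
    exact one_ne_zero (congrFun h ⟨0, Nat.succ_pos r⟩)
  -- orbit-stabilizer
  have hos := card_orbit_mul_card_stabilizer_eq_card_group (GL (Fin n) (ZMod p)) u
  simp only [← Nat.card_eq_fintype_card] at hos
  -- cardinality of GL
  have hGL : Nat.card (GL (Fin n) (ZMod p)) = ∏ i ∈ range n, (p ^ n - p ^ i) := by
    rw [Matrix.card_GL_field, ZMod.card]
    exact (Finset.prod_range fun i => p ^ n - p ^ i).symm
  -- cardinality of the orbit
  have hcard : Nat.card (Fin n → ZMod p) = p ^ n := by
    simp [Nat.card_eq_fintype_card, ZMod.card]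
  have horb : Nat.card (orbit (GL (Fin n) (ZMod p)) u) = p ^ n - 1 := by
    rw [orbit_eq_ne_zero hu, ← Set.compl_singleton_eq, Nat.card_coe_set_eq]
    have h0 := Set.ncard_add_ncard_compl ({0} : Set (Fin n → ZMod p))
    rw [Set.ncard_singleton, hcard] at h0
    omega
  -- key product identity
  have hfac : ∀ i : ℕ, p ^ n - p ^ (i + 1) = p * (p ^ r - p ^ i) := by
    intro i
    rw [hn, pow_succ', pow_succ', Nat.mul_sub]
  have key : ∏ i ∈ range n, (p ^ n - p ^ i) = N * (p ^ n - 1) := by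
    simp only [hn] at hfac ⊢
    rw [Finset.prod_range_succ', Finset.prod_congr rfl (fun i _ => hfac i),
      Finset.prod_mul_distrib, Finset.prod_const, Finset.card_range, pow_zero, hN]
  -- divisibility of the stabilizer cardinality by (r+1)!
  have hmem : ∀ σ : Equiv.Perm (Fin n), permGL σ ∈ stabilizer (GL (Fin n) (ZMod p)) u := by
    intro σ
    rw [MulAction.mem_stabilizer_iff]
    exact permGL_mulVec_one σ
  have hdvd : (r + 1).factorial ∣ Nat.card (stabilizer (GL (Fin n) (ZMod p)) u) := by
    have h := Subgroup.card_dvd_of_injective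
      ((permGL (m := Fin n) (R := ZMod p)).codRestrict _ hmem)
      (fun a b hab => permGL_injective (Subtype.ext_iff.mp hab))
    rwa [Nat.card_eq_fintype_card, Fintype.card_perm, Fintype.card_fin] at h
  -- the stabilizer has cardinality N
  have hpn : 1 < p ^ n := Nat.one_lt_pow (Nat.succ_ne_zero r) hp.one_lt
  have hstab : Nat.card (stabilizer (GL (Fin n) (ZMod p)) u) = N := by
    have h2 : Nat.card (orbit (GL (Fin n) (ZMod p)) u)
        * Nat.card (stabilizer (GL (Fin n) (ZMod p)) u) = N * (p ^ n - 1) := by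
      rw [hos, hGL, key]
    rw [horb, mul_comm N] at h2
    exact Nat.eq_of_mul_eq_mul_left (by omega) h2
  rw [hstab] at hdvd
  have hNpos : 0 < N := by
    rw [← hstab]
    rw [Nat.card_eq_fintype_card]
    exact Fintype.card_pos
  exact ⟨hdvd, Nat.div_pos (Nat.le_of_dvd hNpos hdvd) (Nat.factorial_pos _)⟩
end

section
/- Let q ≥ 2, d ≥ 1, N = (d+1)(q-1). For every affine map f : ‖σ^N‖ → ℝ^d (equivalently, for every sequence of N+1 points a₁,…,a_{N+1} ∈ ℝ^d), there exist q pairwise disjoint subsets F₁,…,F_q of [N+1] such that ⋂_{i=1}^q conv{a_j : j ∈ Fᵢ} ≠ ∅. -/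
open Finset Metric Module Set
open scoped RealInnerProductSpace

variable {E : Type*} [NormedAddCommGroup E] [InnerProductSpace ℝ E]

/-- Representation of members of the convex hull of a finite range by weights on indices. -/
lemma tv_mem_convexHull_range {ι : Type} [Fintype ι] [DecidableEq ι] {f : ι → E} {y : E}
    (hy : y ∈ convexHull ℝ (Set.range f)) :
    ∃ w : ι → ℝ, (∀ i, 0 ≤ w i) ∧ ∑ i, w i = 1 ∧ ∑ i, w i • f i = y := by
  obtain ⟨κ, _, w, z, hw0, hw1, hz, hsum⟩ := mem_convexHull_iff_exists_fintype.1 hy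
  classical
  choose g hg using hz
  refine ⟨fun j => ∑ i ∈ univ.filter fun i => g i = j, w i, fun j => Finset.sum_nonneg
    fun i _ => hw0 i, ?_, ?_⟩
  · rw [← hw1, Finset.sum_fiberwise]
  · rw [← hsum]
    calc ∑ j : ι, (∑ i ∈ univ.filter fun i => g i = j, w i) • f j
        = ∑ j : ι, ∑ i ∈ univ.filter fun i => g i = j, w i • f (g i) := by
          refine Finset.sum_congr rfl fun j _ => ?_
          rw [Finset.sum_smul]
          refine Finset.sum_congr rfl fun i hi => ?_
          rw [(Finset.mem_filter.1 hi).2]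
      _ = ∑ i : κ, w i • f (g i) := Finset.sum_fiberwise _ _ _
      _ = ∑ i : κ, w i • z i := by simp [hg]

/-- Bárány's colorful Carathéodory theorem (the `0`-version). -/
lemma tv_colorful_caratheodory [FiniteDimensional ℝ E] {n : ℕ}
    (hn : finrank ℝ E = n) {ι κ : Type} [Fintype ι] [Fintype κ] [Nonempty κ] [DecidableEq ι]
    (hcard : Fintype.card ι = n + 1)
    (x : ι → κ → E) (hx : ∀ i, (0:E) ∈ convexHull ℝ (Set.range (x i))) :
    ∃ c : ι → κ, (0:E) ∈ convexHull ℝ (Set.range fun i => x i (c i)) := by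
  classical
  have hιne : Nonempty ι := Fintype.card_pos_iff.1 (by omega)
  obtain ⟨c, -, hmin⟩ := Finset.exists_min_image (univ : Finset (ι → κ))
    (fun c => infDist 0 (convexHull ℝ (Set.range fun i => x i (c i)))) Finset.univ_nonempty
  set f : ι → E := fun i => x i (c i) with hf
  set K := convexHull ℝ (Set.range f) with hK
  by_cases h0 : (0:E) ∈ K
  · exact ⟨c, h0⟩
  exfalso
  have hKconv : Convex ℝ K := convex_convexHull ℝ _
  have hKcomp : IsCompact K := (Set.finite_range f).isCompact_convexHull ℝ
  have hKne : K.Nonempty := ⟨f (Classical.arbitrary ι),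
    subset_convexHull ℝ _ (Set.mem_range_self _)⟩
  obtain ⟨p, hpK, hp⟩ := hKcomp.exists_infDist_eq_dist hKne 0
  have hpne : p ≠ 0 := fun h => h0 (h ▸ hpK)
  have hpnorm : 0 < ‖p‖ ^ 2 := pow_pos (norm_pos_iff.2 hpne) 2
  -- variational inequality
  have hvar : ∀ w ∈ K, ‖p‖ ^ 2 ≤ ⟪p, w⟫ := by
    have hiInf : ‖(0:E) - p‖ = ⨅ w : K, ‖(0:E) - w‖ := by
      rw [← dist_eq_norm, ← hp, infDist_eq_iInf]
      exact congrArg _ (funext fun w => (dist_eq_norm _ _))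
    have := (norm_eq_iInf_iff_real_inner_le_zero hKconv hpK).1 hiInf
    intro w hw
    have h2 := this w hw
    rw [zero_sub, inner_neg_left, inner_sub_right, neg_nonpos] at h2
    rw [← real_inner_self_eq_norm_sq]
    linarith
  -- convex combination representation of p
  obtain ⟨lam, hlam0, hlam1, hlamsum⟩ := tv_mem_convexHull_range hpK
  have hfK : ∀ i, f i ∈ K := fun i => subset_convexHull ℝ _ (Set.mem_range_self i)
  -- contact: supports lie on the hyperplane
  have hcontact : ∀ i, lam i ≠ 0 → ⟪p, f i⟫ = ‖p‖ ^ 2 := by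
    have hsum0 : ∑ i : ι, lam i * (⟪p, f i⟫ - ‖p‖ ^ 2) = 0 := by
      have : ∑ i : ι, lam i * ⟪p, f i⟫ = ‖p‖ ^ 2 := by
        have : ⟪p, ∑ i : ι, lam i • f i⟫ = ∑ i : ι, lam i * ⟪p, f i⟫ := by
          rw [inner_sum]; exact Finset.sum_congr rfl fun i _ => real_inner_smul_right _ _ _
        rw [← this, hlamsum, real_inner_self_eq_norm_sq]
      simp only [mul_sub, Finset.sum_sub_distrib, this, ← Finset.sum_mul, hlam1, one_mul,
        sub_self]
    have hterm : ∀ i ∈ (Finset.univ : Finset ι), 0 ≤ lam i * (⟪p, f i⟫ - ‖p‖ ^ 2) := fun i _ =>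
      mul_nonneg (hlam0 i) (by linarith [hvar (f i) (hfK i)])
    intro i hi
    have := (Finset.sum_eq_zero_iff_of_nonneg hterm).1 hsum0 i (Finset.mem_univ i)
    rcases mul_eq_zero.1 this with h | h
    · exact absurd h hi
    · linarith
  -- p is in the hull of the contact points
  have hpJ : p ∈ convexHull ℝ (f '' {i | lam i ≠ 0}) := by
    set J : Finset ι := Finset.univ.filter (fun i => lam i ≠ 0) with hJ
    have hs1 : ∑ i ∈ J, lam i = 1 := by
      rw [hJ, Finset.sum_filter_ne_zero, hlam1]
    have hs2 : J.centerMass lam f = p := by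
      rw [Finset.centerMass_eq_of_sum_1 _ _ hs1, ← hlamsum, hJ]
      refine Finset.sum_filter_of_ne fun i _ h => ?_
      intro h0'
      exact h (by rw [h0', zero_smul])
    rw [← hs2]
    refine Finset.centerMass_mem_convexHull _ (fun i hi => hlam0 i) (by rw [hs1]; norm_num)
      fun i hi => ⟨i, (Finset.mem_filter.1 hi).2, rfl⟩
  -- Carathéodory inside the hyperplane
  rw [convexHull_eq_union] at hpJ
  simp only [Set.mem_iUnion] at hpJ
  obtain ⟨t, hts, hAI, hpt⟩ := hpJ
  have htH : ∀ y ∈ t, ⟪p, y⟫ = ‖p‖ ^ 2 := by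
    intro y hy
    obtain ⟨i, hi, rfl⟩ := hts hy
    exact hcontact i hi
  have htne : t.Nonempty := by
    rcases Finset.eq_empty_or_nonempty t with rfl | h
    · simp at hpt
    · exact h
  have hcardt : t.card ≤ n := by
    have hn1 : 1 ≤ n := by
      have : Nontrivial E := nontrivial_of_ne p 0 hpne
      have := Module.finrank_pos (R := ℝ) (M := E)
      omega
    haveI : Fact (finrank ℝ E = (n - 1) + 1) := ⟨by omega⟩
    obtain ⟨y₀, hy₀⟩ := htne
    haveI : Nonempty ↥t := ⟨⟨y₀, hy₀⟩⟩
    have hspan : vectorSpan ℝ (↑t : Set E) ≤ (ℝ ∙ p)ᗮ := by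
      rw [vectorSpan_eq_span_vsub_set_right ℝ (show y₀ ∈ (↑t : Set E) from hy₀)]
      refine Submodule.span_le.2 ?_
      rintro _ ⟨y, hy, rfl⟩
      simp only [SetLike.mem_coe, Submodule.mem_orthogonal_singleton_iff_inner_right,
        vsub_eq_sub]
      rw [inner_sub_right, htH y hy, htH y₀ hy₀, sub_self]
    have hdim : finrank ℝ (vectorSpan ℝ (↑t : Set E)) ≤ n - 1 := by
      have h1 := Submodule.finrank_mono hspan
      have h2 := Submodule.finrank_orthogonal_span_singleton (𝕜 := ℝ) (n := n - 1) (_i := ⟨by omega⟩) hpne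
      omega
    have hc := hAI.finrank_vectorSpan_add_one
    have hre : vectorSpan ℝ (Set.range (Subtype.val : {x // x ∈ t} → E))
        = vectorSpan ℝ (↑t : Set E) := by
      congr 1
      ext y
      simp [Subtype.range_coe]
    rw [hre, Fintype.card_coe] at hc
    omega
  -- find a droppable index
  have hdrop : ∃ i₀ : ι, ∀ y ∈ t, y ∈ f '' {i | i ≠ i₀} := by
    by_contra hcon
    push_neg at hcon
    choose Y hY1 hY2 using hcon
    have hinj : Function.Injective Y := by
      intro i₁ i₂ he
      obtain ⟨i, -, hfi⟩ := hts (hY1 i₁)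
      have e1 : i = i₁ := by
        by_contra hne
        exact hY2 i₁ ⟨i, hne, hfi⟩
      have e2 : i = i₂ := by
        by_contra hne
        exact hY2 i₂ ⟨i, hne, hfi.trans he⟩
      rw [← e1, e2]
    have := Finset.card_le_card_of_injOn (s := (Finset.univ : Finset ι)) (t := t) Y (fun i _ => hY1 i) hinj.injOn
    rw [Finset.card_univ, hcard] at this
    omega
  obtain ⟨i₀, hi₀⟩ := hdrop
  -- replacement point
  have hj₀ : ∃ j₀ : κ, ⟪p, x i₀ j₀⟫ ≤ 0 := by
    by_contra hcon
    push_neg at hcon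
    have hconvS : Convex ℝ {y : E | 0 < ⟪p, y⟫} :=
      convex_halfSpace_gt ⟨fun a b => inner_add_right p a b, fun r a => real_inner_smul_right p a r⟩ 0
    have hsub : convexHull ℝ (Set.range (x i₀)) ⊆ {y : E | 0 < ⟪p, y⟫} := by
      refine convexHull_min ?_ hconvS
      rintro _ ⟨j, rfl⟩
      exact hcon j
    have := hsub (hx i₀)
    simp [inner_zero_right] at this
  obtain ⟨j₀, hj₀⟩ := hj₀
  set c' : ι → κ := Function.update c i₀ j₀ with hc'
  set f' : ι → E := fun i => x i (c' i) with hf'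
  set K' := convexHull ℝ (Set.range f') with hK'
  have hpK' : p ∈ K' := by
    have h1 : f '' {i | i ≠ i₀} ⊆ Set.range f' := by
      rintro _ ⟨i, hi, rfl⟩
      exact ⟨i, by simp [hf', hc', hf, Function.update_of_ne hi]⟩
    have h2 : (↑t : Set E) ⊆ Set.range f' := fun y hy => h1 (hi₀ y hy)
    exact convexHull_mono h2 hpt
  have hwK' : x i₀ j₀ ∈ K' := subset_convexHull ℝ _ ⟨i₀, by simp [hf', hc']⟩
  -- build a closer point, contradiction
  set w := x i₀ j₀ with hw
  set A : ℝ := ‖p‖ ^ 2 - ⟪p, w⟫ with hA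
  set B : ℝ := ‖w - p‖ ^ 2 with hB
  have hApos : 0 < A := by rw [hA]; linarith
  have hBnn : 0 ≤ B := by positivity
  set τ : ℝ := min 1 (A / (B + 1)) with hτ
  have hτpos : 0 < τ := lt_min one_pos (by positivity)
  have hτ1 : τ ≤ 1 := min_le_left _ _
  have hτB : τ * (B + 1) ≤ A := by
    rw [← le_div_iff₀ (by positivity)]
    exact min_le_right _ _
  set z : E := p + τ • (w - p) with hz
  have hzK' : z ∈ K' := by
    have := hKconv
    have h := (convex_convexHull ℝ (Set.range f')) hpK' hwK'
      (by linarith : (0:ℝ) ≤ 1 - τ) (le_of_lt hτpos) (by ring)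
    convert h using 1
    rw [hz]
    module
  have hznorm : ‖z‖ ^ 2 = ‖p‖ ^ 2 - 2 * τ * A + τ ^ 2 * B := by
    rw [hz, norm_add_sq_real, real_inner_smul_right, norm_smul, inner_sub_right,
      real_inner_self_eq_norm_sq, Real.norm_eq_abs, abs_of_pos hτpos, mul_pow]
    rw [hA, hB]; ring
  have hge : ‖p‖ ≤ ‖z‖ := by
    have h1 : infDist 0 K ≤ infDist 0 K' := hmin c' (Finset.mem_univ c')
    have h2 : infDist 0 K' ≤ dist 0 z := infDist_le_dist_of_mem hzK'
    calc ‖p‖ = dist 0 p := by rw [dist_zero_left]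
      _ = infDist 0 K := hp.symm
      _ ≤ infDist 0 K' := h1
      _ ≤ dist 0 z := h2
      _ = ‖z‖ := by rw [dist_zero_left]
  have hge2 : ‖p‖ ^ 2 ≤ ‖z‖ ^ 2 := by
    exact pow_le_pow_left₀ (norm_nonneg _) hge 2
  nlinarith [hτpos, hτB, hBnn, hApos]

/-- (Tverberg's theorem, 1966.)  Let `q ≥ 2`, `d ≥ 1` and
`N = (d+1)(q-1)`.  For every choice of `N+1` points `a₁, …, a_{N+1}` in `ℝ^d`
(equivalently, every affine map `‖σ^N‖ → ℝ^d`) there exist `q` pairwise disjoint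
subsets `F₁, …, F_q` of `[N+1]` such that `⋂_{i=1}^q conv{a_j : j ∈ Fᵢ} ≠ ∅`. -/
theorem stmt19 (q d N : ℕ) (hq : 2 ≤ q) (hd : 1 ≤ d) (hN : N = (d + 1) * (q - 1))
    (a : Fin (N + 1) → EuclideanSpace ℝ (Fin d)) :
    ∃ F : Fin q → Finset (Fin (N + 1)),
      (∀ i j : Fin q, i ≠ j → Disjoint (F i) (F j)) ∧
      (⋂ i, convexHull ℝ (a '' (F i))).Nonempty := by
  classical
  have hq1 : 1 ≤ q - 1 := by omega
  -- lifted points in ℝ^{d+1}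
  set b : Fin (N + 1) → (Fin (d + 1) → ℝ) := fun j => Fin.snoc (fun r => a j r) (1 : ℝ) with hb
  -- the vectors v_i in ℝ^{q-1} summing to zero
  set v : Fin q → (Fin (q - 1) → ℝ) := fun i k =>
    (if (i : ℕ) = (k : ℕ) then 1 else 0) + (if (i : ℕ) = q - 1 then -1 else 0) with hv
  have hvsum : ∀ k : Fin (q - 1), ∑ i : Fin q, v i k = 0 := by
    intro k
    have h1 : ∀ i : Fin q, ((i : ℕ) = (k : ℕ)) = (i = (⟨(k : ℕ), by omega⟩ : Fin q)) := by
      intro i; rw [Fin.ext_iff]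
    have h2 : ∀ i : Fin q, ((i : ℕ) = q - 1) = (i = (⟨q - 1, by omega⟩ : Fin q)) := by
      intro i; rw [Fin.ext_iff]
    simp only [hv, h1, h2, Finset.sum_add_distrib, Finset.sum_ite_eq' Finset.univ,
      Finset.mem_univ, if_true]
    norm_num
  -- the tensor points
  set x : Fin (N + 1) → Fin q → EuclideanSpace ℝ (Fin (d + 1) × Fin (q - 1)) :=
    fun j i => WithLp.toLp 2 fun rk => b j rk.1 * v i rk.2 with hx
  have hx0 : ∀ j, (0 : EuclideanSpace ℝ (Fin (d + 1) × Fin (q - 1))) ∈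
      convexHull ℝ (Set.range (x j)) := by
    intro j
    refine mem_convexHull_of_exists_fintype (fun _ : Fin q => (q : ℝ)⁻¹) (x j)
      (fun _ => by positivity) ?_ (fun i => Set.mem_range_self i) ?_
    · rw [Finset.sum_const, Finset.card_univ, Fintype.card_fin, nsmul_eq_mul,
        mul_inv_cancel₀ (by positivity)]
    · ext rk
      rw [WithLp.ofLp_sum, Finset.sum_apply]
      show ∑ i : Fin q, (q : ℝ)⁻¹ * (b j rk.1 * v i rk.2) = 0
      rw [← Finset.mul_sum, ← Finset.mul_sum, hvsum rk.2]
      ring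
  -- colorful Caratheodory
  have hfin : Module.finrank ℝ (EuclideanSpace ℝ (Fin (d + 1) × Fin (q - 1))) = N := by
    simp [finrank_euclideanSpace, hN]
  have hcardι : Fintype.card (Fin (N + 1)) = N + 1 := Fintype.card_fin _
  haveI : Nonempty (Fin q) := ⟨⟨0, by omega⟩⟩
  obtain ⟨c, hc⟩ := tv_colorful_caratheodory hfin hcardι x hx0
  obtain ⟨lam, hlam0, hlam1, hlamsum⟩ := tv_mem_convexHull_range hc
  -- the partition
  set F : Fin q → Finset (Fin (N + 1)) := fun i => Finset.univ.filter (fun j => c j = i) with hF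
  have hdisj : ∀ i j : Fin q, i ≠ j → Disjoint (F i) (F j) := by
    intro i j hij
    rw [Finset.disjoint_left]
    intro k hk hk'
    rw [hF, Finset.mem_filter] at hk hk'
    exact hij (hk.2 ▸ hk'.2 ▸ rfl)
  -- the grouped sums
  set y : Fin q → (Fin (d + 1) → ℝ) := fun i r => ∑ j ∈ F i, lam j * b j r with hy
  have hkey : ∀ (r : Fin (d + 1)) (k : Fin (q - 1)), ∑ i : Fin q, y i r * v i k = 0 := by
    intro r k
    have h0 : (∑ j : Fin (N + 1), lam j • x j (c j)) (r, k) = 0 := by rw [hlamsum]; rfl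
    rw [WithLp.ofLp_sum, Finset.sum_apply] at h0
    have h1 : ∀ i : Fin q, y i r * v i k = ∑ j ∈ F i, lam j * x j (c j) (r, k) := by
      intro i
      rw [hy]
      show (∑ j ∈ F i, lam j * b j r) * v i k = _
      rw [Finset.sum_mul]
      refine Finset.sum_congr rfl fun j hj => ?_
      rw [hF, Finset.mem_filter] at hj
      show lam j * b j r * v i k = lam j * (b j r * v (c j) k)
      rw [hj.2]; ring
    rw [Finset.sum_congr rfl fun i _ => h1 i, Finset.sum_fiberwise]
    rw [← h0]
    exact Finset.sum_congr rfl fun j _ => rfl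
  -- all grouped sums are equal
  set i₀ : Fin q := ⟨q - 1, by omega⟩ with hi₀
  have heq : ∀ i : Fin q, y i = y i₀ := by
    intro i
    by_cases hiv : (i : ℕ) = q - 1
    · exact congrArg y (Fin.ext (show (i:ℕ) = (i₀:ℕ) from hiv))
    · have hik : (i : ℕ) < q - 1 := by omega
      funext r
      have hk := hkey r ⟨(i : ℕ), hik⟩
      have hterm : ∀ i' : Fin q, y i' r * v i' ⟨(i : ℕ), hik⟩ =
          (if i' = i then y i' r else 0) + (if i' = i₀ then -(y i' r) else 0) := by
        intro i'
        rw [hv]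
        show y i' r * ((if (i' : ℕ) = (i : ℕ) then 1 else 0) +
          (if (i' : ℕ) = q - 1 then -1 else 0)) = _
        have e1 : ((i' : ℕ) = (i : ℕ)) = (i' = i) := by rw [Fin.ext_iff]
        have e2 : ((i' : ℕ) = q - 1) = (i' = i₀) := by rw [Fin.ext_iff]
        simp only [e1, e2]
        split_ifs <;> ring
      rw [Finset.sum_congr rfl fun i' _ => hterm i', Finset.sum_add_distrib,
        Finset.sum_ite_eq' Finset.univ, Finset.sum_ite_eq' Finset.univ] at hk
      simp only [Finset.mem_univ, if_true] at hk
      linarith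
  -- the common weight 1/q
  have hblast : ∀ j, b j (Fin.last d) = 1 := fun j => Fin.snoc_last _ _
  have htval : ∀ i : Fin q, ∑ j ∈ F i, lam j = (q : ℝ)⁻¹ := by
    have hsum1 : ∑ i : Fin q, ∑ j ∈ F i, lam j = 1 := by
      rw [hF]
      rw [Finset.sum_fiberwise]
      exact hlam1
    have hconst : ∀ i : Fin q, ∑ j ∈ F i, lam j = y i₀ (Fin.last d) := by
      intro i
      have : y i (Fin.last d) = ∑ j ∈ F i, lam j := by
        rw [hy]
        exact Finset.sum_congr rfl fun j _ => by rw [hblast j, mul_one]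
      rw [← this, heq i]
    have hq0 : (q : ℝ) ≠ 0 := by positivity
    intro i
    rw [hconst i]
    have : (q : ℝ) * y i₀ (Fin.last d) = 1 := by
      calc (q : ℝ) * y i₀ (Fin.last d) = ∑ _i : Fin q, y i₀ (Fin.last d) := by
            rw [Finset.sum_const, Finset.card_univ, Fintype.card_fin, nsmul_eq_mul]
        _ = ∑ i : Fin q, ∑ j ∈ F i, lam j := Finset.sum_congr rfl fun i _ => (hconst i).symm
        _ = 1 := hsum1
    field_simp
    linarith
  have htpos : (0 : ℝ) < (q : ℝ)⁻¹ := by positivity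
  -- the common point
  set P : EuclideanSpace ℝ (Fin d) := (F i₀).centerMass lam a with hP
  have hPmem : ∀ i : Fin q, P ∈ convexHull ℝ (a '' (F i)) := by
    have hcm : ∀ i : Fin q, (F i).centerMass lam a = P := by
      intro i
      rw [hP, Finset.centerMass, Finset.centerMass, htval i, htval i₀]
      congr 1
      ext r
      rw [WithLp.ofLp_sum, WithLp.ofLp_sum, Finset.sum_apply, Finset.sum_apply]
      have hsa : ∀ i : Fin q, ∑ j ∈ F i, (lam j • a j) r = y i (Fin.castSucc r) := by
        intro i'
        rw [hy]
        refine Finset.sum_congr rfl fun j _ => ?_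
        show lam j * a j r = lam j * b j (Fin.castSucc r)
        simp only [hb, Fin.snoc_castSucc]
      rw [hsa i, hsa i₀, heq i]
    intro i
    rw [← hcm i]
    refine Finset.centerMass_mem_convexHull _ (fun j _ => hlam0 j) ?_
      (fun j hj => Set.mem_image_of_mem a (Finset.mem_coe.2 hj))
    rw [htval i]
    exact htpos
  exact ⟨F, hdisj, ⟨P, Set.mem_iInter.2 hPmem⟩⟩
end
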